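/- arXiv:1908.08897 — 6 statements merged into one kernel-verified Lean document; each statement's English description precedes it below -/
import Mathlib

section
/- Let A and B be bounded self-adjoint operators on a complex Hilbert space with B nonnegative. If 0 is in the resolvent set of A + tB for every real t, then 0 is in the resolvent set of A and B A⁻¹ B = 0. -/
/-!
For real `r ≠ 0`, `r - A⁻¹ B = r A⁻¹ (A - r⁻¹ B)` is invertible, so the spectrum of `A⁻¹ B` is
contained in `{0}`.
With `K = √B`, the self-adjoint operator `K A⁻¹ K` has the same nonzero spectrum as `A⁻¹ K K = A⁻¹ B`,
hence spectrum in `{0}`, hence vanishes; and then `B A⁻¹ B = K (K A⁻¹ K) K = 0`.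
-/

theorem spectrum_inverse_mul_subset_zero {R A : Type*} [Field R] [Ring A] [Algebra R A] {a b : A}
    (h : ∀ t : R, IsUnit (a + t • b)) : spectrum R (Ring.inverse a * b) ⊆ {0} := by
  intro r hr
  by_contra hr0
  have ha : IsUnit a := by simpa using h 0
  have hfactor : algebraMap R A r - Ring.inverse a * b =
      Ring.inverse a * (r • (a + (-r⁻¹) • b)) := by
    rw [mul_smul_comm, mul_add, mul_smul_comm, Ring.inverse_mul_cancel a ha, smul_add, smul_smul,
      mul_neg, mul_inv_cancel₀ hr0, neg_one_smul, Algebra.algebraMap_eq_smul_one, sub_eq_add_neg]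
  refine spectrum.mem_iff.mp hr ?_
  rw [hfactor, Algebra.smul_def]
  exact (isUnit_ringInverse.mpr ha).mul (((Ne.isUnit hr0).map _).mul (h _))

theorem spectrum_mul_comm_subset_zero {R A : Type*} [Field R] [Ring A] [Algebra R A] {x y : A}
    (h : spectrum R (y * x) ⊆ {0}) : spectrum R (x * y) ⊆ {0} := by
  intro r hr
  by_contra hr0
  have hmem : r ∈ spectrum R (y * x) \ {0} := by
    rw [← spectrum.nonzero_mul_comm]
    exact ⟨hr, hr0⟩
  exact hr0 (h hmem.1)

theorem CStarAlgebra.mul_inverse_mul_eq_zero {A : Type*} [CStarAlgebra A] [PartialOrder A]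
    [StarOrderedRing A] {a b : A} (ha : IsSelfAdjoint a) (hb : 0 ≤ b)
    (h : ∀ t : ℝ, IsUnit (a + t • b)) : b * Ring.inverse a * b = 0 := by
  set k := CFC.sqrt b
  have hk : IsSelfAdjoint k := IsSelfAdjoint.of_nonneg (CFC.sqrt_nonneg b)
  have hkk : k * k = b := CFC.sqrt_mul_sqrt_self b hb
  have hinv : IsSelfAdjoint (Ring.inverse a) := by
    rw [IsSelfAdjoint, ← Ring.inverse_star, ha.star_eq]
  have hconj : IsSelfAdjoint (k * Ring.inverse a * k) := by
    simpa only [hk.star_eq] using hinv.conjugate k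
  have hspec : spectrum ℝ (k * Ring.inverse a * k) ⊆ {0} := by
    rw [mul_assoc]
    apply spectrum_mul_comm_subset_zero
    rw [mul_assoc, hkk]
    exact spectrum_inverse_mul_subset_zero h
  have hzero : k * Ring.inverse a * k = 0 :=
    CFC.eq_zero_of_spectrum_subset_zero (R := ℝ) _ hspec hconj
  calc b * Ring.inverse a * b = k * (k * Ring.inverse a * k) * k := by
        simp only [← hkk, mul_assoc]
    _ = 0 := by rw [hzero, mul_zero, zero_mul]

/-- If `A`, `B` are bounded self-adjoint operators on a complex Hilbert space, `B` is
nonnegative, and `0` belongs to the resolvent set of `A + t B` for every real `t`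
(i.e. `A + t B` is invertible), then `A` is invertible and `B A⁻¹ B = 0`. -/
theorem stmt0 {H : Type*} [NormedAddCommGroup H] [InnerProductSpace ℂ H] [CompleteSpace H]
    (A B : H →L[ℂ] H) (hA : IsSelfAdjoint A) (hB : B.IsPositive)
    (h : ∀ t : ℝ, IsUnit (A + (t : ℂ) • B)) :
    IsUnit A ∧ B * Ring.inverse A * B = 0 := by
  have hreal : ∀ t : ℝ, IsUnit (A + t • B) := fun t => by
    simpa only [Complex.coe_smul] using h t
  exact ⟨by simpa using h 0, CStarAlgebra.mul_inverse_mul_eq_zero hA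
    ((ContinuousLinearMap.nonneg_iff_isPositive B).mpr hB) hreal⟩
end

section
/- For A = diag(1, −1) and B = (1/2)·(all-ones 2×2 matrix), the union over all real t of the spectra of A + tB equals ℝ \ {0}. -/
/-- For `A = diag(1, −1)` and `B = (1/2)·(all-ones 2×2 matrix)`, the union over all real
`t` of the spectra of `A + t B` equals `ℝ \ {0}`. -/
theorem stmt8 :
    let A : Matrix (Fin 2) (Fin 2) ℝ := !![1, 0; 0, -1]
    let B : Matrix (Fin 2) (Fin 2) ℝ := (1 / 2 : ℝ) • !![1, 1; 1, 1]
    (⋃ t : ℝ, spectrum ℝ (A + t • B)) = {x : ℝ | x ≠ 0} := by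
  intro A B
  have key : ∀ (t x : ℝ),
      (algebraMap ℝ (Matrix (Fin 2) (Fin 2) ℝ) x - (A + t • B)).det = x ^ 2 - t * x - 1 := by
    intro t x
    simp [A, B, Matrix.det_fin_two, Matrix.algebraMap_matrix_apply]
    ring
  ext x
  simp only [Set.mem_iUnion, spectrum.mem_iff, Set.mem_setOf_eq]
  constructor
  · rintro ⟨t, ht⟩ hx0
    apply ht
    rw [Matrix.isUnit_iff_isUnit_det, isUnit_iff_ne_zero, key, hx0]
    norm_num
  · intro hx
    refine ⟨x - 1 / x, ?_⟩
    rw [Matrix.isUnit_iff_isUnit_det, isUnit_iff_ne_zero, not_not, key]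
    field_simp
    ring
end

section
/- Let A and B be bounded self-adjoint operators on a complex Hilbert space with B nonnegative and B ≠ 0. Then the set ℝ \ ⋃_{t∈ℝ} spec(A + tB) is countable. -/
/-!
If `l` lies in no `σ(A + tB)`, then `B (l - A)⁻¹ B = 0`: with `s = √B`, a nonzero point `z` of
the spectrum of the self-adjoint operator `s (l - A)⁻¹ s` is real and lies in `σ((l - A)⁻¹ B)`,
which forces `l ∈ σ(A + z⁻¹ B)`. Hence, for `x` with `Bx ≠ 0`, every such `l` is a zero of
`g(μ) = re ⟪Bx, (μ - A)⁻¹ Bx⟫`, whose derivative `-‖(μ - A)⁻¹ Bx‖²` is negative on the open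
set `ρ(A) ∩ ℝ`. So these zeros are isolated, and a discrete subset of `ℝ` is countable.
-/

open Topology
open scoped InnerProductSpace

theorem Set.Countable.of_forall_injOn_nhds {X Y : Type*} [TopologicalSpace X]
    [SecondCountableTopology X] {f : X → Y} {s : Set X} {c : Y} (hs : ∀ x ∈ s, f x = c)
    (hf : ∀ x ∈ s, ∃ u ∈ 𝓝 x, Set.InjOn f u) : s.Countable := by
  refine (HereditarilyLindelofSpace.isLindelof s).countable_of_isDiscrete <|
    isDiscrete_iff_forall_mem_exists_isOpen.2 fun x hx => ?_
  obtain ⟨u, hu, hf⟩ := hf x hx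
  obtain ⟨v, hvu, hv, hxv⟩ := mem_nhds_iff.1 hu
  refine ⟨v, hv, Set.eq_singleton_iff_unique_mem.2 ⟨⟨hxv, hx⟩, fun y hy => ?_⟩⟩
  exact hf (hvu hy.1) (hvu hxv) ((hs y hy.2).trans (hs x hx).symm)

/-- `k - (a + z⁻¹ b) = z⁻¹ (k - a) (z - (k - a)⁻¹ b)`. -/
theorem spectrum.mem_add_inv_smul_of_mem_resolvent_mul {𝕜 𝒜 : Type*} [Field 𝕜] [Ring 𝒜]
    [Algebra 𝕜 𝒜] {a b : 𝒜} {k z : 𝕜} (hk : k ∈ resolventSet 𝕜 a) (hz : z ≠ 0)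
    (hzs : z ∈ spectrum 𝕜 (resolvent a k * b)) : k ∈ spectrum 𝕜 (a + z⁻¹ • b) := by
  rw [spectrum.mem_iff] at hzs ⊢
  contrapose! hzs
  have hfactor : algebraMap 𝕜 𝒜 z - resolvent a k * b =
      algebraMap 𝕜 𝒜 z * (resolvent a k * (algebraMap 𝕜 𝒜 k - (a + z⁻¹ • b))) := by
    rw [← sub_sub, mul_sub (resolvent a k), resolvent, Ring.inverse_mul_cancel _ hk, mul_sub,
      mul_one, mul_smul_comm, ← smul_mul_assoc, Algebra.smul_def, ← mul_assoc, ← mul_assoc,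
      ← map_mul, mul_inv_cancel₀ hz, map_one, one_mul]
  rw [hfactor]
  exact ((isUnit_iff_ne_zero.2 hz).map _).mul (spectrum.isUnit_resolvent.1 hk |>.mul hzs)

theorem IsSelfAdjoint.resolvent_ofReal {𝒜 : Type*} [Ring 𝒜] [StarRing 𝒜] [Algebra ℂ 𝒜]
    [StarModule ℂ 𝒜] {a : 𝒜} (ha : IsSelfAdjoint a) (r : ℝ) :
    IsSelfAdjoint (resolvent a (r : ℂ)) := by
  have : IsSelfAdjoint (algebraMap ℂ 𝒜 r - a) :=
    (IsSelfAdjoint.algebraMap 𝒜 (Complex.conj_ofReal r)).sub ha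
  rw [resolvent, IsSelfAdjoint, ← Ring.inverse_star, this.star_eq]

theorem mul_resolvent_mul_eq_zero {𝒜 : Type*} [CStarAlgebra 𝒜] [PartialOrder 𝒜]
    [StarOrderedRing 𝒜] {a b : 𝒜} (ha : IsSelfAdjoint a) (hb : 0 ≤ b) {r : ℝ}
    (hr : ∀ t : ℝ, (r : ℂ) ∉ spectrum ℂ (a + (t : ℂ) • b)) :
    b * resolvent a (r : ℂ) * b = 0 := by
  have hr₀ : (r : ℂ) ∈ resolventSet ℂ a := by simpa [spectrum] using hr 0
  set s := CFC.sqrt b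
  set R := resolvent a (r : ℂ)
  have hs : IsSelfAdjoint s := .of_nonneg (CFC.sqrt_nonneg b)
  have hT : IsSelfAdjoint (s * R * s) := by
    simpa [hs.star_eq] using (ha.resolvent_ofReal r).conjugate s
  have hspec : spectrum ℂ (s * R * s) ⊆ {0} := by
    intro z hz
    by_contra hz₀
    have hzR : z ∈ spectrum ℂ (R * b) := by
      have : z ∈ spectrum ℂ (s * (R * s)) \ {0} := ⟨by rwa [← mul_assoc], hz₀⟩
      rw [spectrum.nonzero_mul_comm, mul_assoc, CFC.sqrt_mul_sqrt_self b hb] at this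
      exact this.1
    rw [hT.mem_spectrum_eq_re hz] at hz₀ hzR
    have := spectrum.mem_add_inv_smul_of_mem_resolvent_mul hr₀ hz₀ hzR
    exact hr z.re⁻¹ (by simpa using this)
  have hT₀ : s * R * s = 0 := CFC.eq_zero_of_spectrum_subset_zero (R := ℂ) _ hspec
  calc b * R * b = s * (s * R * s) * s := by
        rw [← CFC.sqrt_mul_sqrt_self b hb]; noncomm_ring
    _ = 0 := by rw [hT₀, mul_zero, zero_mul]

theorem ContinuousLinearMap.resolvent_apply_ne_zero {𝕜 E : Type*} [NontriviallyNormedField 𝕜]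
    [NormedAddCommGroup E] [NormedSpace 𝕜 E] {T : E →L[𝕜] E} {k : 𝕜}
    (hk : k ∈ resolventSet 𝕜 T) {y : E} (hy : y ≠ 0) : resolvent T k y ≠ 0 := by
  intro h
  have := congr($(Ring.mul_inverse_cancel _ hk) y)
  simp_all [resolvent]

section HilbertSpace

variable {H : Type*} [NormedAddCommGroup H] [InnerProductSpace ℂ H] [CompleteSpace H]
  {T : H →L[ℂ] H}

theorem hasDerivAt_re_inner_resolvent (hT : IsSelfAdjoint T) (y : H) {μ : ℝ}
    (hμ : (μ : ℂ) ∈ resolventSet ℂ T) :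
    HasDerivAt (fun t : ℝ => (⟪y, resolvent T (t : ℂ) y⟫_ℂ).re)
      (-‖resolvent T (μ : ℂ) y‖ ^ 2) μ := by
  have hR : HasDerivAt (fun t : ℝ => resolvent T (t : ℂ)) (-resolvent T (μ : ℂ) ^ 2) μ := by
    have hC := (spectrum.hasDerivAt_resolvent_const_left hμ).hasFDerivAt.restrictScalars ℝ
    simpa [Function.comp_def] using hC.comp_hasDerivAt μ Complex.ofRealCLM.hasDerivAt
  have hRy :=
    ((ContinuousLinearMap.apply ℂ H y).restrictScalars ℝ).hasFDerivAt.comp_hasDerivAt μ hR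
  have hinner := (hasDerivAt_const μ y).inner ℂ hRy
  have hsq : ⟪y, resolvent T (μ : ℂ) (resolvent T (μ : ℂ) y)⟫_ℂ =
      ‖resolvent T (μ : ℂ) y‖ ^ 2 :=
    ((hT.resolvent_ofReal μ).isSymmetric _ _).symm.trans (inner_self_eq_norm_sq_to_K _)
  simpa [Function.comp_def, hsq, ← Complex.ofReal_pow] using
    Complex.reCLM.hasFDerivAt.comp_hasDerivAt μ hinner

theorem strictAntiOn_re_inner_resolvent (hT : IsSelfAdjoint T) {y : H} (hy : y ≠ 0)
    {D : Set ℝ} (hD : Convex ℝ D) (hDT : ∀ μ ∈ D, (μ : ℂ) ∈ resolventSet ℂ T) :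
    StrictAntiOn (fun t : ℝ => (⟪y, resolvent T (t : ℂ) y⟫_ℂ).re) D := by
  have hderiv μ (hμ : μ ∈ D) := hasDerivAt_re_inner_resolvent hT y (hDT μ hμ)
  refine strictAntiOn_of_hasDerivWithinAt_neg hD
    (fun μ hμ => (hderiv μ hμ).continuousAt.continuousWithinAt)
    (fun μ hμ => (hderiv μ (interior_subset hμ)).hasDerivWithinAt) fun μ hμ => ?_
  have := ContinuousLinearMap.resolvent_apply_ne_zero (hDT μ (interior_subset hμ)) hy
  exact neg_neg_of_pos (pow_pos (norm_pos_iff.2 this) 2)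

end HilbertSpace

/-- Let `A`, `B` be bounded self-adjoint operators on a complex Hilbert space with `B`
nonnegative and `B ≠ 0`. Then the set of real numbers lying in no spectrum
`spec(A + t B)`, `t ∈ ℝ`, is countable. -/
theorem stmt11 {H : Type*} [NormedAddCommGroup H] [InnerProductSpace ℂ H] [CompleteSpace H]
    (A B : H →L[ℂ] H) (hA : IsSelfAdjoint A) (hB : B.IsPositive) (hB0 : B ≠ 0) :
    Set.Countable {l : ℝ | ∀ t : ℝ, (l : ℂ) ∉ spectrum ℂ (A + (t : ℂ) • B)} := by
  obtain ⟨x, hx⟩ : ∃ x, B x ≠ 0 := by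
    by_contra! h
    exact hB0 (ContinuousLinearMap.ext h)
  have hBnonneg : 0 ≤ B := (ContinuousLinearMap.nonneg_iff_isPositive B).2 hB
  refine Set.Countable.of_forall_injOn_nhds
    (f := fun t : ℝ => (⟪B x, resolvent A (t : ℂ) (B x)⟫_ℂ).re) (c := 0)
    (fun l hl => ?_) fun l hl => ?_
  · have hBRB : B (resolvent A (l : ℂ) (B x)) = 0 := by
      simpa using congr($(mul_resolvent_mul_eq_zero hA hBnonneg hl) x)
    have hsymm := hB.isSelfAdjoint.isSymmetric x (resolvent A (l : ℂ) (B x))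
    simp only [ContinuousLinearMap.coe_coe] at hsymm
    simp [hsymm, hBRB]
  · have hres : IsOpen {μ : ℝ | (μ : ℂ) ∈ resolventSet ℂ A} :=
      (spectrum.isOpen_resolventSet A).preimage Complex.continuous_ofReal
    obtain ⟨ε, hε, hball⟩ := Metric.isOpen_iff.1 hres l (by simpa [spectrum] using hl 0)
    exact ⟨_, Metric.ball_mem_nhds l hε,
      (strictAntiOn_re_inner_resolvent hA hx (convex_ball l ε) hball).injOn⟩
end

section
/- Let A and B be bounded self-adjoint operators on a complex Hilbert space with B nonnegative and B ≠ 0. Then ⋃_{t∈ℝ} spec(A + tB) is dense in ℝ (where spectra are regarded as subsets of ℝ). -/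
/-!
Suppose the real interval `(λ - ε, λ + ε)` meets no spectrum of `A + t B`, and put `a = A - λ`,
`b = B`. Then the self-adjoint operators `R t = (a + t b)⁻¹` exist with `‖R t‖ ≤ ε⁻¹`. Because
`μ - R t b = μ R t (a + (t - μ⁻¹) b)` is invertible, `R t b` has no nonzero real spectrum; its
nonzero spectrum is that of the self-adjoint `√b R t √b`, so `b R t b = 0`. The resolvent
identity then makes `R t = R 0 - t R 0 b R 0` affine in `t`; being bounded it is constant,
whence `b = 0`.
-/

open scoped Ring

lemma eq_zero_of_forall_norm_add_smul_le {E : Type*} [NormedAddCommGroup E] [NormedSpace ℝ E]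
    {x y : E} {C : ℝ} (h : ∀ t : ℝ, ‖x + t • y‖ ≤ C) : y = 0 := by
  by_contra hy
  have hy' : 0 < ‖y‖ := norm_pos_iff.mpr hy
  have hbound : ∀ t : ℝ, |t| * ‖y‖ ≤ C + ‖x‖ := fun t => by
    rw [← Real.norm_eq_abs, ← norm_smul]
    calc ‖t • y‖ = ‖(x + t • y) - x‖ := by rw [add_sub_cancel_left]
      _ ≤ ‖x + t • y‖ + ‖x‖ := norm_sub_le _ _
      _ ≤ C + ‖x‖ := by linarith [h t]
  have := hbound ((|C + ‖x‖| + 1) / ‖y‖)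
  rw [abs_div, abs_norm, div_mul_cancel₀ _ hy'.ne', abs_of_nonneg (by positivity)] at this
  linarith [le_abs_self (C + ‖x‖)]

section CStarAlgebra

variable {A : Type*} [CStarAlgebra A]

lemma IsSelfAdjoint.isUnit_and_norm_ringInverse_le {a : A} (ha : IsSelfAdjoint a) {ε : ℝ}
    (hε : 0 < ε) (hgap : ∀ μ ∈ spectrum ℝ a, ε ≤ |μ|) : IsUnit a ∧ ‖a⁻¹ʳ‖ ≤ ε⁻¹ := by
  have hunit : IsUnit a := spectrum.isUnit_of_zero_notMem ℝ fun h0 => by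
    simpa [hε.not_ge] using hgap 0 h0
  refine ⟨hunit, ?_⟩
  rw [← cfc_ringInverse_id (R := ℝ) a hunit]
  refine norm_cfc_le (by positivity) fun μ hμ => ?_
  rw [norm_inv, Real.norm_eq_abs]
  exact inv_anti₀ hε (hgap μ hμ)

variable [PartialOrder A] [StarOrderedRing A]

lemma mul_mul_eq_zero_of_spectrum_mul_subset_zero {r b : A} (hr : IsSelfAdjoint r) (hb : 0 ≤ b)
    (h : spectrum ℝ (r * b) ⊆ {0}) : b * r * b = 0 := by
  set c := CFC.sqrt b
  have hc : c * c = b := CFC.sqrt_mul_sqrt_self b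
  have hcrc : c * r * c = 0 := by
    refine CFC.eq_zero_of_spectrum_subset_zero (R := ℝ) _ (fun μ hμ => ?_)
      (hr.conjugate_self (CFC.sqrt_nonneg b).isSelfAdjoint)
    by_contra hμ0
    have : μ ∈ spectrum ℝ (r * c * c) \ {0} := by
      rw [← spectrum.nonzero_mul_comm, ← mul_assoc]; exact ⟨hμ, hμ0⟩
    rw [mul_assoc, hc] at this
    exact hμ0 (h this.1)
  calc b * r * b = c * (c * r * c) * c := by rw [← hc]; simp only [mul_assoc]
    _ = 0 := by rw [hcrc, mul_zero, zero_mul]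

theorem eq_zero_of_forall_spectrum_add_smul_gap {a b : A} (ha : IsSelfAdjoint a) (hb : 0 ≤ b)
    {ε : ℝ} (hε : 0 < ε) (hgap : ∀ t : ℝ, ∀ μ ∈ spectrum ℝ (a + t • b), ε ≤ |μ|) : b = 0 := by
  set R : ℝ → A := fun t => (a + t • b)⁻¹ʳ
  have hsa : ∀ t : ℝ, IsSelfAdjoint (a + t • b) := fun t =>
    ha.add ((IsSelfAdjoint.all t).smul hb.isSelfAdjoint)
  have hunit : ∀ t : ℝ, IsUnit (a + t • b) := fun t =>
    ((hsa t).isUnit_and_norm_ringInverse_le hε (hgap t)).1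
  have hres : ∀ s t : ℝ, R s - R t = (t - s) • (R s * b * R t) := fun s t => by
    rw [Ring.inverse_sub_inverse (iff_of_true (hunit s) (hunit t)), add_sub_add_left_eq_sub,
      ← sub_smul, mul_smul_comm, smul_mul_assoc]
  have hspec : ∀ t : ℝ, spectrum ℝ (R t * b) ⊆ {0} := fun t μ hμ => by
    by_contra hμ0
    rw [Set.mem_singleton_iff] at hμ0
    refine spectrum.mem_iff.mp hμ ?_
    have hfactor : algebraMap ℝ A μ - R t * b = R t * (μ • (a + (t - μ⁻¹) • b)) := by
      rw [sub_smul, ← add_sub_assoc, smul_sub, mul_sub, mul_smul_comm, mul_smul_comm,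
        mul_smul_comm, Ring.inverse_mul_cancel _ (hunit t), smul_smul, mul_inv_cancel₀ hμ0,
        one_smul, Algebra.algebraMap_eq_smul_one]
    rw [hfactor]
    exact ((hunit t).ringInverse).mul (IsUnit.smul (Units.mk0 μ hμ0) (hunit _))
  have hbRb : ∀ t : ℝ, b * R t * b = 0 := fun t =>
    mul_mul_eq_zero_of_spectrum_mul_subset_zero (hsa t).ringInverse hb (hspec t)
  have hRb : ∀ t : ℝ, R t * b = R 0 * b := fun t => by
    have := congrArg (· * b) (hres t 0)
    simpa [sub_mul, mul_assoc, hbRb, sub_eq_zero] using this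
  have hR_affine : ∀ t : ℝ, R t = R 0 + t • -(R 0 * b * R 0) := fun t => by
    rw [← sub_eq_iff_eq_add', hres t 0, hRb, zero_sub, neg_smul, smul_neg]
  have hRbR : R 0 * b * R 0 = 0 := neg_eq_zero.mp <| eq_zero_of_forall_norm_add_smul_le
    (C := ε⁻¹) fun t => by
      rw [← hR_affine t]; exact ((hsa t).isUnit_and_norm_ringInverse_le hε (hgap t)).2
  have h10 : R 1 = R 0 := by rw [hR_affine 1, hRbR, neg_zero, smul_zero, add_zero]
  calc b = (a + (1 : ℝ) • b) - (a + (0 : ℝ) • b) := by simp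
    _ = (R 1)⁻¹ʳ - (R 0)⁻¹ʳ := by simp only [R, Ring.inverse_inverse (hunit _)]
    _ = 0 := by rw [h10, sub_self]

end CStarAlgebra

/-- Let `A`, `B` be bounded self-adjoint operators on a complex Hilbert space with `B`
nonnegative and `B ≠ 0`. Then the union over all real `t` of the (real) spectra of
`A + t B` is dense in `ℝ`. -/
theorem stmt12 {H : Type*} [NormedAddCommGroup H] [InnerProductSpace ℂ H] [CompleteSpace H]
    (A B : H →L[ℂ] H) (hA : IsSelfAdjoint A) (hB : B.IsPositive) (hB0 : B ≠ 0) :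
    Dense (⋃ t : ℝ, {l : ℝ | (l : ℂ) ∈ spectrum ℂ (A + (t : ℂ) • B)}) := by
  rw [Metric.dense_iff]
  intro lam ε hε
  by_contra hempty
  refine hB0 (eq_zero_of_forall_spectrum_add_smul_gap (a := A - algebraMap ℝ _ lam)
    (hA.sub (.algebraMap _ (.all lam))) (B.nonneg_iff_isPositive.mpr hB) hε fun t μ hμ => ?_)
  by_contra! hμε
  have hspec : μ + lam ∈ spectrum ℝ (A + (t : ℂ) • B) := by
    rwa [spectrum.add_mem_iff, Complex.coe_smul, neg_add_eq_sub, ← sub_add_eq_add_sub]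
  refine hempty ⟨μ + lam, ?_, Set.mem_iUnion.mpr ⟨t, spectrum.algebraMap_mem ℂ hspec⟩⟩
  simpa [Real.dist_eq] using hμε
end

section
/- Let A and B be bounded self-adjoint operators with B nonnegative. If spec(A + tB) = spec(A) for all real t and spec(A) ≠ ℝ, then B = 0. -/
/-- Let `A`, `B` be bounded self-adjoint operators on a complex Hilbert space with `B`
nonnegative. If `spec(A + t B) = spec(A)` for all real `t` and `spec(A) ≠ ℝ` (i.e. some
real number lies outside the spectrum of `A`), then `B = 0`. -/
theorem stmt13 {H : Type*} [NormedAddCommGroup H] [InnerProductSpace ℂ H] [CompleteSpace H]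
    (A B : H →L[ℂ] H) (hA : IsSelfAdjoint A) (hB : B.IsPositive)
    (hspec : ∀ t : ℝ, spectrum ℂ (A + (t : ℂ) • B) = spectrum ℂ A)
    (hne : ∃ l : ℝ, (l : ℂ) ∉ spectrum ℂ A) :
    B = 0 := by
  have hBsa : IsSelfAdjoint B := hB.isSelfAdjoint
  -- Each A + tB is self-adjoint, so its norm equals its spectral radius,
  -- which equals that of A by hypothesis.
  have hnorm : ∀ t : ℝ, ‖A + (t : ℂ) • B‖₊ = ‖A‖₊ := by
    intro t
    have hsa : IsSelfAdjoint (A + (t : ℂ) • B) := by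
      rw [IsSelfAdjoint, star_add, star_smul, hA.star_eq, hBsa.star_eq, Complex.star_def,
        Complex.conj_ofReal]
    have h1 := hsa.spectralRadius_eq_nnnorm
    have h2 := hA.spectralRadius_eq_nnnorm
    rw [spectralRadius, hspec t, ← spectralRadius] at h1
    rw [h2] at h1
    exact_mod_cast h1.symm
  have hbound : ∀ t : ℝ, |t| * ‖B‖ ≤ 2 * ‖A‖ := by
    intro t
    have h1 : ‖(t : ℂ) • B‖ = ‖(A + (t : ℂ) • B) - A‖ := by rw [add_sub_cancel_left]
    have h2 : ‖(A + (t : ℂ) • B) - A‖ ≤ ‖A + (t : ℂ) • B‖ + ‖A‖ := norm_sub_le _ _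
    have h3 : ‖A + (t : ℂ) • B‖ = ‖A‖ := by
      rw [← coe_nnnorm, ← coe_nnnorm, hnorm t]
    calc |t| * ‖B‖ = ‖(t : ℂ) • B‖ := by
          rw [norm_smul]; simp
      _ ≤ ‖A‖ + ‖A‖ := by rw [h1]; rw [h3] at h2; exact h2
      _ = 2 * ‖A‖ := by ring
  by_contra hB0
  have hBpos : 0 < ‖B‖ := norm_pos_iff.mpr hB0
  have := hbound ((2 * ‖A‖ + 1) / ‖B‖)
  rw [abs_of_nonneg (by positivity)] at this
  rw [div_mul_cancel₀ _ (ne_of_gt hBpos)] at this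
  linarith
end

section
/- With K, v, A, B as in the rank-one-extension construction, if λ is real, A − λ is invertible, and B(A − λ)⁻¹B = 0, then λ is an eigenvalue of K. -/
open scoped InnerProductSpace

/-- Let `K` be a bounded self-adjoint operator on a complex Hilbert space `H` and `v ∈ H`.
On `H × ℂ` define `A (x, α) = (Kx + α v, ⟪v, x⟫)` and `B (x, α) = (0, α)`. If `λ` is
real, `A − λ` is invertible, and `B (A − λ)⁻¹ B = 0`, then `λ` is an eigenvalue of `K`. -/
theorem stmt17 {H : Type*} [NormedAddCommGroup H] [InnerProductSpace ℂ H] [CompleteSpace H]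
    (K : H →L[ℂ] H) (hK : IsSelfAdjoint K) (v : H)
    (A B : (H × ℂ) →L[ℂ] (H × ℂ))
    (hA : ∀ x : H, ∀ α : ℂ, A (x, α) = (K x + α • v, ⟪v, x⟫_ℂ))
    (hB : ∀ x : H, ∀ α : ℂ, B (x, α) = (0, α))
    (lam : ℝ) (hunit : IsUnit (A - ((lam : ℂ)) • 1))
    (hzero : B * Ring.inverse (A - ((lam : ℂ)) • 1) * B = 0) :
    ∃ x : H, x ≠ 0 ∧ K x = ((lam : ℝ) : ℂ) • x := by
  set T := A - ((lam : ℂ)) • 1 with hT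
  set R := Ring.inverse T with hR
  set p : H × ℂ := R (0, 1) with hp
  -- second component of p is 0, from hzero
  have h2 : p.2 = 0 := by
    have := congrArg (fun f : (H × ℂ) →L[ℂ] (H × ℂ) => f ((0 : H), (1 : ℂ))) hzero
    simp only [ContinuousLinearMap.mul_apply, ContinuousLinearMap.zero_apply] at this
    rw [hB 0 1] at this
    have hp' : (R ((0:H), (1:ℂ))) = p := rfl
    rw [hp', hB p.1 p.2] at this
    exact congrArg Prod.snd this
  -- T p = (0,1)
  have hTp : T p = ((0 : H), (1 : ℂ)) := by
    calc T p = (T * R) ((0:H), (1:ℂ)) := rfl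
    _ = ((0:H), (1:ℂ)) := by rw [hR, Ring.mul_inverse_cancel T hunit]; rfl
  have hpeq : p = (p.1, (0 : ℂ)) := by rw [← h2]
  have hTp1 : T (p.1, (0:ℂ)) = ((0:H), (1:ℂ)) := by rw [← hpeq]; exact hTp
  have hTapp : T (p.1, (0:ℂ)) = (K p.1 - (lam:ℂ) • p.1, ⟪v, p.1⟫_ℂ) := by
    rw [hT]
    simp only [ContinuousLinearMap.sub_apply, ContinuousLinearMap.smul_apply,
      ContinuousLinearMap.one_apply]
    rw [hA p.1 0]
    simp [Prod.smul_mk, Prod.mk_sub_mk, sub_eq_iff_eq_add]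
  rw [hTapp] at hTp1
  have h1 : K p.1 - (lam:ℂ) • p.1 = 0 := congrArg Prod.fst hTp1
  have hinner : ⟪v, p.1⟫_ℂ = 1 := congrArg Prod.snd hTp1
  refine ⟨p.1, ?_, by rwa [sub_eq_zero] at h1⟩
  intro h0
  rw [h0, inner_zero_right] at hinner
  exact one_ne_zero hinner.symm
end
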